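/- Let G be a topological group acting continuously on a topological monoid M by monoid automorphisms, arising from a continuous homomorphism I : G → M into a topological monoid of homotopy self-equivalences. Then the Borel construction EG ×_G M → BG is a fiber bundle with fiber M, which is the pullback along BI : BG → BM of the path-loop fibration; in particular the sequence EG ×_G M → BG → BM is a fibration sequence. -/

import Mathlib

/-!
STATEMENT 11: Let G be a topological group acting continuously on a topological
monoid M (through a homomorphism into self-equivalences) and let E → B be a
(locally trivial) principal G-bundle (modelling EG → BG).  Then the Borel
construction E ×_G M → B is a fiber bundle with fiber M.

Per the context, it is acceptable to formalize the statement that the Borel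
construction of a principal G-bundle action gives a (locally trivial) fiber
bundle over B with fiber M; the Borel construction is the quotient of E × M by
the diagonal G-action.
-/

/-- The Borel construction `E ×_G M`: the quotient of `E × M` by the diagonal
`G`-action. -/
def BorelConstruction (G E M : Type*) [Group G] [MulAction G E] [MulAction G M] :
    Type _ :=
  Quotient (MulAction.orbitRel G (E × M))

instance BorelConstruction.instTopologicalSpace (G E M : Type*) [Group G]
    [MulAction G E] [MulAction G M] [TopologicalSpace E] [TopologicalSpace M] :
    TopologicalSpace (BorelConstruction G E M) :=
  instTopologicalSpaceQuotient

/-- The projection `E ×_G M → B` induced by a `G`-invariant map `p : E → B`. -/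
def borelProj {G E M B : Type*} [Group G] [MulAction G E] [MulAction G M]
    (p : E → B) (hp : ∀ (g : G) (x : E), p (g • x) = p x) :
    BorelConstruction G E M → B :=
  Quotient.lift (fun em : E × M => p em.1) (by
    rintro a b ⟨g, rfl⟩
    exact hp g b.1)

theorem stmt11
    (G : Type) [Group G] [TopologicalSpace G] [IsTopologicalGroup G]
    (M : Type) [Monoid M] [TopologicalSpace M] [ContinuousMul M]
    (E : Type) [TopologicalSpace E] [MulAction G E] [ContinuousSMul G E]
    [MulAction G M] [ContinuousSMul G M]
    -- G acts on M by (continuous) monoid automorphisms, coming from a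
    -- homomorphism I of G into homotopy self-equivalences of M
    (hact : ∀ (g : G) (m m' : M), g • (m * m') = (g • m) * (g • m'))
    (B : Type) [TopologicalSpace B]
    (p : E → B) (hpc : Continuous p) (hps : Function.Surjective p)
    (hp : ∀ (g : G) (x : E), p (g • x) = p x)
    -- E → B is a (locally trivial) principal G-bundle
    (hfree : ∀ (g : G) (x : E), g • x = x → g = 1)
    (htriv : ∀ b : B, ∃ U : Set B, IsOpen U ∧ b ∈ U ∧
      ∃ φ : {x : E // p x ∈ U} ≃ₜ U × G,
        (∀ x : {x : E // p x ∈ U}, ((φ x).1 : B) = p x.1) ∧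
        (∀ (g : G) (x : {x : E // p x ∈ U}),
          φ ⟨g • (x : E), by rw [hp]; exact x.2⟩ = ((φ x).1, g * (φ x).2))) :
    -- the Borel construction is a fiber bundle over B with fiber M
    Continuous (borelProj (G := G) (M := M) p hp) ∧
      ∀ b : B, ∃ U : Set B, IsOpen U ∧ b ∈ U ∧
        ∃ ψ : {x : BorelConstruction G E M // borelProj (G := G) (M := M) p hp x ∈ U}
            ≃ₜ U × M,
          ∀ x, ((ψ x).1 : B) = borelProj (G := G) (M := M) p hp x.1 := by

  classical
  have hcont : Continuous (borelProj (G := G) (M := M) p hp) :=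
    Continuous.quotient_lift (hpc.comp continuous_fst) _
  refine ⟨hcont, fun b => ?_⟩
  obtain ⟨U, hU, hbU, φ, hφ1, hφ2⟩ := htriv b
  -- the quotient map on pairs
  have hq : IsOpenQuotientMap (Quotient.mk (MulAction.orbitRel G (E × M))) :=
    MulAction.isOpenQuotientMap_quotientMk
  set s : Set (BorelConstruction G E M) :=
    (borelProj (G := G) (M := M) p hp) ⁻¹' U with hs_def
  have hs : IsOpen s := hcont.isOpen_preimage U hU
  have hq' : Topology.IsQuotientMap
      (s.restrictPreimage (Quotient.mk (MulAction.orbitRel G (E × M)))) :=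
    hq.isQuotientMap.restrictPreimage_isOpen hs
  set q' := s.restrictPreimage (Quotient.mk (MulAction.orbitRel G (E × M))) with hq'_def
  -- the trivialization on pairs
  have memE : ∀ x : ↥((Quotient.mk (MulAction.orbitRel G (E × M))) ⁻¹' s),
      p x.1.1 ∈ U := fun x => x.2
  set F : ↥((Quotient.mk (MulAction.orbitRel G (E × M))) ⁻¹' s) → U × M :=
    fun x => ((φ ⟨x.1.1, memE x⟩).1, (φ ⟨x.1.1, memE x⟩).2⁻¹ • x.1.2) with hF_def
  have hFc : Continuous F := by
    have h1 : Continuous fun x : ↥((Quotient.mk (MulAction.orbitRel G (E × M))) ⁻¹' s) =>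
        φ ⟨x.1.1, memE x⟩ :=
      φ.continuous.comp (Continuous.subtype_mk
        (continuous_fst.comp continuous_subtype_val) _)
    exact (continuous_fst.comp h1).prodMk
      (((continuous_snd.comp h1).inv).smul
        (continuous_snd.comp continuous_subtype_val))
  -- F is invariant on fibers of q'
  have hFinv : ∀ x y, q' x = q' y → F x = F y := by
    rintro ⟨⟨e, m⟩, hx⟩ ⟨⟨e', m'⟩, hy⟩ h
    have h2 : (Quotient.mk (MulAction.orbitRel G (E × M)) (e, m) :
        BorelConstruction G E M) = Quotient.mk (MulAction.orbitRel G (E × M)) (e', m') :=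
      congrArg Subtype.val h
    obtain ⟨g, hg⟩ := Quotient.exact h2
    obtain ⟨rfl, rfl⟩ : g • e' = e ∧ g • m' = m := Prod.mk.injEq .. ▸ hg
    have he' : p e' ∈ U := hy
    have key : φ ⟨g • e', by rw [hp]; exact he'⟩ = ((φ ⟨e', he'⟩).1, g * (φ ⟨e', he'⟩).2) :=
      hφ2 g ⟨e', he'⟩
    simp only [hF_def]
    rw [show (⟨(g • e', g • m').1, _⟩ : {x : E // p x ∈ U}) =
        ⟨g • e', by rw [hp]; exact he'⟩ from rfl, key]
    refine Prod.ext rfl ?_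
    show (g * (φ ⟨e', he'⟩).2)⁻¹ • (g • m') = (φ ⟨e', he'⟩).2⁻¹ • m'
    rw [mul_inv_rev, mul_smul, inv_smul_smul]
  -- the forward map, defined via a section of the quotient map
  set ψf : ↥s → U × M := F ∘ Function.surjInv hq'.surjective with hψf_def
  have hψfq : ∀ x, ψf (q' x) = F x := fun x =>
    hFinv _ _ (Function.surjInv_eq hq'.surjective (q' x))
  have hψfc : Continuous ψf := by
    rw [hq'.continuous_iff]
    exact hFc.congr fun x => (hψfq x).symm
  -- the inverse map
  set χ : U × M → ↥s := fun um =>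
    ⟨Quotient.mk (MulAction.orbitRel G (E × M)) ((φ.symm (um.1, 1)).1, um.2), by
      show p (φ.symm (um.1, 1)).1 ∈ U
      rw [← hφ1 (φ.symm (um.1, 1)), φ.apply_symm_apply]
      exact um.1.2⟩ with hχ_def
  have hχc : Continuous χ := by
    refine Continuous.subtype_mk ?_ _
    exact continuous_quotient_mk'.comp
      ((continuous_subtype_val.comp (φ.symm.continuous.comp
        (continuous_fst.prodMk continuous_const))).prodMk continuous_snd)
  -- right inverse : ψf ∘ χ = id
  have hrl : ∀ um : U × M, ψf (χ um) = um := by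
    rintro ⟨u, m⟩
    have hx : ((φ.symm (u, 1)).1, m) ∈
        (Quotient.mk (MulAction.orbitRel G (E × M))) ⁻¹' s := (χ (u, m)).2
    have : χ (u, m) = q' ⟨((φ.symm (u, 1)).1, m), hx⟩ := rfl
    rw [this, hψfq]
    have hsub : (⟨((φ.symm (u, 1)).1, m).1, memE ⟨((φ.symm (u, 1)).1, m), hx⟩⟩ :
        {x : E // p x ∈ U}) = φ.symm (u, 1) := Subtype.ext rfl
    simp only [hF_def, hsub, φ.apply_symm_apply]
    exact Prod.ext rfl (by show (1 : G)⁻¹ • m = m; rw [inv_one, one_smul])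
  -- left inverse : χ ∘ ψf = id
  have hlr : ∀ x : ↥s, χ (ψf x) = x := by
    intro x
    obtain ⟨y, rfl⟩ := hq'.surjective x
    rw [hψfq]
    obtain ⟨⟨e, m⟩, hy⟩ := y
    have he : p e ∈ U := hy
    apply Subtype.ext
    show Quotient.mk (MulAction.orbitRel G (E × M))
        ((φ.symm ((φ ⟨e, he⟩).1, 1)).1, (φ ⟨e, he⟩).2⁻¹ • m) =
      Quotient.mk (MulAction.orbitRel G (E × M)) (e, m)
    have key : φ ⟨(φ ⟨e, he⟩).2⁻¹ • e, by rw [hp]; exact he⟩ =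
        ((φ ⟨e, he⟩).1, (φ ⟨e, he⟩).2⁻¹ * (φ ⟨e, he⟩).2) := hφ2 _ ⟨e, he⟩
    rw [inv_mul_cancel] at key
    have hfix : (φ.symm ((φ ⟨e, he⟩).1, 1)).1 = (φ ⟨e, he⟩).2⁻¹ • e := by
      rw [← key, φ.symm_apply_apply]
    refine Quotient.sound ⟨(φ ⟨e, he⟩).2⁻¹, ?_⟩
    exact Prod.ext hfix.symm rfl
  refine ⟨U, hU, hbU, ⟨⟨ψf, χ, hlr, hrl⟩, hψfc, hχc⟩, fun x => ?_⟩
  obtain ⟨y, rfl⟩ := hq'.surjective x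
  show ((ψf (q' y)).1 : B) = borelProj (G := G) (M := M) p hp (q' y).1
  rw [hψfq]
  exact hφ1 ⟨y.1.1, memE y⟩
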